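/- On an almost-Hermitian manifold there exists a unique almost-Hermitian connection ∇ (i.e. ∇J = ∇g = 0) whose torsion 2-forms Θ^i, defined by the first structure equation dθ^i = -θ^i_j ∧ θ^j + Θ^i, have everywhere vanishing (1,1) part. -/

import Mathlib

/- STATEMENT 4: On an almost-Hermitian manifold there exists a unique almost-Hermitian
connection (`∇J = ∇g = 0`) whose torsion has everywhere vanishing `(1,1)`-part (the canonical
connection).

Chart model: on `E` we are given a smooth almost complex structure `J` (`J² = -1`) and a smooth
compatible Riemannian metric `g`.  A connection is given by its Christoffel tensor
`Γ : E → E →ₗ E →ₗ E`, with `∇_X s = D_X s + Γ(X)(s)`.  The torsion on constant fields is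
`τ(X,Y) = Γ(X)Y - Γ(Y)X`; its complexification evaluated on a `(1,0)` and a `(0,1)` vector
lying in `T''` expresses the vanishing of the `(1,1)`-part of `Θ = (Θ^i)`. -/

noncomputable section

variable {E : Type*} [NormedAddCommGroup E] [NormedSpace ℝ E] [FiniteDimensional ℝ E]

/-- `∇ g = 0`, expressed on constant vector fields. -/
def CovMetric (g : E → E →L[ℝ] E →L[ℝ] ℝ) (Γ : E → E →ₗ[ℝ] E →ₗ[ℝ] E) : Prop :=
  ∀ x X u v, fderiv ℝ (fun y => g y u v) x X = g x (Γ x X u) v + g x u (Γ x X v)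

/-- `∇ J = 0`, expressed on constant vector fields. -/
def CovJ (J : E → E →L[ℝ] E) (Γ : E → E →ₗ[ℝ] E →ₗ[ℝ] E) : Prop :=
  ∀ x X v, fderiv ℝ (fun y => J y v) x X + Γ x X (J x v) = J x (Γ x X v)

/-- complexified torsion: `τ_ℂ(a + √-1 b, c + √-1 d)` with `τ(X,Y) = Γ(X)Y - Γ(Y)X`. -/
def tauC (Γ : E → E →ₗ[ℝ] E →ₗ[ℝ] E) (x : E) (p q : E × E) : E × E :=
  ((Γ x p.1 q.1 - Γ x q.1 p.1) - (Γ x p.2 q.2 - Γ x q.2 p.2),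
   (Γ x p.1 q.2 - Γ x q.2 p.1) + (Γ x p.2 q.1 - Γ x q.1 p.2))

/-- the `(1,1)`-part of the torsion `Θ` of `∇` vanishes: for every `(1,0)`-vector
`X - √-1 J X` and `(0,1)`-vector `Y + √-1 J Y`, the complexified torsion lies in `T''`
(its `T'`-component, i.e. `Θ^{(1,1)}`, is zero). -/
def Torsion11Free (J : E → E →L[ℝ] E) (Γ : E → E →ₗ[ℝ] E →ₗ[ℝ] E) : Prop :=
  ∀ x X Y,
    J x (tauC Γ x (X, -(J x X)) (Y, J x Y)).1 = (tauC Γ x (X, -(J x X)) (Y, J x Y)).2 ∧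
    J x (tauC Γ x (X, -(J x X)) (Y, J x Y)).2 = -(tauC Γ x (X, -(J x X)) (Y, J x Y)).1

set_option linter.unusedSectionVars false
set_option maxHeartbeats 1000000

noncomputable section
namespace Stmt4Aux

variable {E : Type*} [NormedAddCommGroup E] [NormedSpace ℝ E] [FiniteDimensional ℝ E]

variable (Jx : E →L[ℝ] E) (gx : E →L[ℝ] E →L[ℝ] ℝ)
  (A : E →L[ℝ] E →L[ℝ] E →L[ℝ] ℝ) (Bx : E →L[ℝ] E →L[ℝ] E)

/-- `gx` as a bilinear form. -/
def gb : LinearMap.BilinForm ℝ E :=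
  LinearMap.mk₂ ℝ (fun u v => gx u v) (by intros; simp) (by intros; simp)
    (by intros; simp) (by intros; simp)

@[simp] lemma gb_apply (u v : E) : gb gx u v = gx u v := rfl

variable (hgnd : (gb gx).Nondegenerate)

def sol (f : Module.Dual ℝ E) : E := ((gb gx).toDual hgnd).symm f

set_option linter.unusedSectionVars false

lemma sol_spec (f : Module.Dual ℝ E) (w : E) : gx (sol gx hgnd f) w = f w :=
  LinearMap.BilinForm.apply_toDual_symm_apply (B := gb gx) (hB := hgnd) f w

lemma sol_add (f f' : Module.Dual ℝ E) :
    sol gx hgnd (f + f') = sol gx hgnd f + sol gx hgnd f' := by simp [sol]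

lemma sol_smul (c : ℝ) (f : Module.Dual ℝ E) :
    sol gx hgnd (c • f) = c • sol gx hgnd f := by simp [sol]

/-- functional for the Levi-Civita-type connection. -/
def l0 (X Y : E) : Module.Dual ℝ E :=
  (1/2 : ℝ) • ((A X Y).toLinearMap + (A Y X).toLinearMap - ((A.flip X).flip Y).toLinearMap)

lemma l0_apply (X Y W : E) : l0 A X Y W = (1/2) * (A X Y W + A Y X W - A W X Y) := by
  simp only [l0, LinearMap.smul_apply, LinearMap.add_apply, LinearMap.sub_apply,
    ContinuousLinearMap.coe_coe, ContinuousLinearMap.flip_apply, smul_eq_mul]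

def G0 : E →ₗ[ℝ] E →ₗ[ℝ] E :=
  LinearMap.mk₂ ℝ (fun X Y => sol gx hgnd (l0 A X Y))
    (fun X X' Y => by
      have h : l0 A (X + X') Y = l0 A X Y + l0 A X' Y := by
        ext W; simp [l0_apply]; ring
      rw [h, sol_add])
    (fun c X Y => by
      have h : l0 A (c • X) Y = c • l0 A X Y := by
        ext W; simp [l0_apply]; ring
      rw [h, sol_smul])
    (fun X Y Y' => by
      have h : l0 A X (Y + Y') = l0 A X Y + l0 A X Y' := by
        ext W; simp [l0_apply]; ring
      rw [h, sol_add])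
    (fun c X Y => by
      have h : l0 A X (c • Y) = c • l0 A X Y := by
        ext W; simp [l0_apply]; ring
      rw [h, sol_smul])

lemma hG0 (X Y W : E) :
    gx (G0 gx A hgnd X Y) W = (1/2) * (A X Y W + A Y X W - A W X Y) := by
  rw [G0]; rw [LinearMap.mk₂_apply, sol_spec, l0_apply]


/-- the "Levi-Civita"-type part with `J`-correction: `P X Y = B X Y + G0 X (J Y) - J (G0 X Y)`. -/
def Pm : E →ₗ[ℝ] E →ₗ[ℝ] E :=
  (ContinuousLinearMap.coeLM ℝ).comp Bx.toLinearMap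
    + (G0 gx A hgnd).compl₂ Jx.toLinearMap - (G0 gx A hgnd).compr₂ Jx.toLinearMap

lemma Pm_apply (X Y : E) :
    Pm Jx gx A Bx hgnd X Y = Bx X Y + G0 gx A hgnd X (Jx Y) - Jx (G0 gx A hgnd X Y) := rfl

/-- `Nt a b = P a b - J (P (J a) b)`. -/
def Nt : E →ₗ[ℝ] E →ₗ[ℝ] E :=
  Pm Jx gx A Bx hgnd
    - (((Pm Jx gx A Bx hgnd).comp Jx.toLinearMap).compr₂ Jx.toLinearMap)

lemma Nt_apply (a b : E) :
    Nt Jx gx A Bx hgnd a b = Pm Jx gx A Bx hgnd a b - Jx (Pm Jx gx A Bx hgnd (Jx a) b) := rfl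

/-- functional for the extra correction `C`. -/
def lC (X Y : E) : Module.Dual ℝ E :=
  (1/4 : ℝ) • (((gx (Nt Jx gx A Bx hgnd Y X)).comp Jx).toLinearMap
    + (gx.flip Y).toLinearMap ∘ₗ ((Nt Jx gx A Bx hgnd).flip X) ∘ₗ Jx.toLinearMap)

lemma lC_apply (X Y W : E) :
    lC Jx gx A Bx hgnd X Y W
      = (1/4) * (gx (Nt Jx gx A Bx hgnd Y X) (Jx W)
          + gx (Nt Jx gx A Bx hgnd (Jx W) X) Y) := by
  simp only [lC, LinearMap.smul_apply, LinearMap.add_apply, LinearMap.coe_comp,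
    Function.comp_apply, ContinuousLinearMap.coe_coe, ContinuousLinearMap.comp_apply,
    LinearMap.flip_apply, ContinuousLinearMap.flip_apply, smul_eq_mul]
  try ring

def Ct : E →ₗ[ℝ] E →ₗ[ℝ] E :=
  LinearMap.mk₂ ℝ (fun X Y => sol gx hgnd (lC Jx gx A Bx hgnd X Y))
    (fun X X' Y => by
      have h : lC Jx gx A Bx hgnd (X + X') Y
          = lC Jx gx A Bx hgnd X Y + lC Jx gx A Bx hgnd X' Y := by
        ext W; simp [lC_apply, map_add]; try ring
      rw [h, sol_add])
    (fun c X Y => by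
      have h : lC Jx gx A Bx hgnd (c • X) Y = c • lC Jx gx A Bx hgnd X Y := by
        ext W; simp [lC_apply, map_smul]; try ring
      rw [h, sol_smul])
    (fun X Y Y' => by
      have h : lC Jx gx A Bx hgnd X (Y + Y')
          = lC Jx gx A Bx hgnd X Y + lC Jx gx A Bx hgnd X Y' := by
        ext W; simp [lC_apply, map_add]; try ring
      rw [h, sol_add])
    (fun c X Y => by
      have h : lC Jx gx A Bx hgnd X (c • Y) = c • lC Jx gx A Bx hgnd X Y := by
        ext W; simp [lC_apply, map_smul]; try ring
      rw [h, sol_smul])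

lemma hCt (X Y W : E) :
    gx (Ct Jx gx A Bx hgnd X Y) W
      = (1/4) * (gx (Nt Jx gx A Bx hgnd Y X) (Jx W)
          + gx (Nt Jx gx A Bx hgnd (Jx W) X) Y) := by
  rw [Ct, LinearMap.mk₂_apply, sol_spec, lC_apply]

/-- the canonical connection at the point. -/
def Gam : E →ₗ[ℝ] E →ₗ[ℝ] E :=
  G0 gx A hgnd + (-(1/2 : ℝ)) • ((Pm Jx gx A Bx hgnd).compr₂ Jx.toLinearMap)
    + Ct Jx gx A Bx hgnd

lemma Gam_apply (X Y : E) :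
    Gam Jx gx A Bx hgnd X Y
      = G0 gx A hgnd X Y - (1/2 : ℝ) • Jx (Pm Jx gx A Bx hgnd X Y)
        + Ct Jx gx A Bx hgnd X Y := by
  simp only [Gam, LinearMap.add_apply, LinearMap.smul_apply, LinearMap.compr₂_apply,
    ContinuousLinearMap.coe_coe]
  module


section Identities

variable (hJ2x : ∀ v, Jx (Jx v) = -v)
  (hsx : ∀ u v, gx u v = gx v u)
  (hcx : ∀ u v, gx (Jx u) (Jx v) = gx u v)
  (hA1 : ∀ X u v, A X u v = A X v u)
  (hB2 : ∀ X v, Bx X (Jx v) + Jx (Bx X v) = 0)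
  (hAB : ∀ X u v, A X (Jx u) (Jx v) + gx (Bx X u) (Jx v) + gx (Jx u) (Bx X v) = A X u v)

include hgnd hJ2x hsx hcx hA1 hB2 hAB

lemma gJ (a b : E) : gx (Jx a) b = -gx a (Jx b) := by
  have h := hcx a (Jx b)
  rw [hJ2x] at h
  simp only [map_neg] at h
  linarith

lemma gext (v w : E) (h : ∀ z, gx v z = gx w z) : v = w := by
  have h0 : ∀ z, gb gx (v - w) z = 0 := fun z => by
    simp only [map_sub, LinearMap.sub_apply, gb_apply]
    rw [h z]; ring
  exact sub_eq_zero.mp (hgnd.1 (v - w) h0)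

lemma G0sym (X Y : E) : G0 gx A hgnd X Y = G0 gx A hgnd Y X := by
  apply gext Jx gx A Bx hgnd hJ2x hsx hcx hA1 hB2 hAB
  intro Z
  rw [hG0, hG0]
  linarith [hA1 Z X Y]

lemma Met0 (X u v : E) :
    gx (G0 gx A hgnd X u) v + gx u (G0 gx A hgnd X v) = A X u v := by
  have h1 := hG0 gx A hgnd X u v
  have h2 := hG0 gx A hgnd X v u
  have h3 := hsx u (G0 gx A hgnd X v)
  have h4 := hA1 X v u
  linarith

lemma hBneg (X v : E) : Bx X (Jx v) = -Jx (Bx X v) :=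
  eq_neg_of_add_eq_zero_left (hB2 X v)

lemma PJ (X v : E) :
    Pm Jx gx A Bx hgnd X (Jx v) = -Jx (Pm Jx gx A Bx hgnd X v) := by
  rw [Pm_apply, Pm_apply, hJ2x, hBneg Jx gx A Bx hgnd hJ2x hsx hcx hA1 hB2 hAB]
  simp only [map_add, map_sub, map_neg, hJ2x]
  abel

lemma Pskew (X u v : E) :
    gx (Pm Jx gx A Bx hgnd X u) v + gx u (Pm Jx gx A Bx hgnd X v) = 0 := by
  rw [Pm_apply, Pm_apply]
  simp only [map_add, map_sub, ContinuousLinearMap.add_apply, ContinuousLinearMap.sub_apply]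
  have f1 := Met0 Jx gx A Bx hgnd hJ2x hsx hcx hA1 hB2 hAB X (Jx u) v
  have f2 := Met0 Jx gx A Bx hgnd hJ2x hsx hcx hA1 hB2 hAB X (Jx v) u
  have f3 := gJ Jx gx A Bx hgnd hJ2x hsx hcx hA1 hB2 hAB (G0 gx A hgnd X u) v
  have f4 := hsx u (Jx (G0 gx A hgnd X v))
  have f4b := gJ Jx gx A Bx hgnd hJ2x hsx hcx hA1 hB2 hAB (G0 gx A hgnd X v) u
  have f5 := hsx u (G0 gx A hgnd X (Jx v))
  have f6 := hsx (Jx v) (G0 gx A hgnd X u)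
  have f6b := hsx (Jx u) (G0 gx A hgnd X v)
  have f7 := hA1 X (Jx v) u
  -- the `hAB`-consequence
  have h8 := hAB X u (Jx v)
  rw [hJ2x, hBneg Jx gx A Bx hgnd hJ2x hsx hcx hA1 hB2 hAB] at h8
  simp only [map_neg, ContinuousLinearMap.neg_apply] at h8
  have h9 := hcx u (Bx X v)
  have f8 := hA1 X u (Jx v)
  linarith

lemma NtJ1 (a b : E) :
    Nt Jx gx A Bx hgnd (Jx a) b = Jx (Nt Jx gx A Bx hgnd a b) := by
  rw [Nt_apply, Nt_apply, hJ2x]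
  simp only [map_neg, map_sub, LinearMap.neg_apply, hJ2x]
  abel

lemma NtJ2 (a b : E) :
    Nt Jx gx A Bx hgnd a (Jx b) = -Jx (Nt Jx gx A Bx hgnd a b) := by
  rw [Nt_apply, Nt_apply, PJ Jx gx A Bx hgnd hJ2x hsx hcx hA1 hB2 hAB, PJ Jx gx A Bx hgnd hJ2x hsx hcx hA1 hB2 hAB]
  simp only [map_neg, map_sub, hJ2x]
  abel


lemma CtJ (X v : E) :
    Ct Jx gx A Bx hgnd X (Jx v) = Jx (Ct Jx gx A Bx hgnd X v) := by
  apply gext Jx gx A Bx hgnd hJ2x hsx hcx hA1 hB2 hAB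
  intro W
  have h1 := hCt Jx gx A Bx hgnd X (Jx v) W
  rw [NtJ1 Jx gx A Bx hgnd hJ2x hsx hcx hA1 hB2 hAB v X, NtJ1 Jx gx A Bx hgnd hJ2x hsx hcx hA1 hB2 hAB W X] at h1
  have h2 := hCt Jx gx A Bx hgnd X v (Jx W)
  rw [hJ2x] at h2
  simp only [map_neg, LinearMap.neg_apply, ContinuousLinearMap.neg_apply] at h2
  have h3 := gJ Jx gx A Bx hgnd hJ2x hsx hcx hA1 hB2 hAB (Ct Jx gx A Bx hgnd X v) W
  have h4 := hcx (Nt Jx gx A Bx hgnd v X) W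
  have h5 := hcx (Nt Jx gx A Bx hgnd W X) v
  linarith

lemma Cskew (X u v : E) :
    gx (Ct Jx gx A Bx hgnd X u) v + gx u (Ct Jx gx A Bx hgnd X v) = 0 := by
  have h1 := hCt Jx gx A Bx hgnd X u v
  have h2 := hCt Jx gx A Bx hgnd X v u
  rw [NtJ1 Jx gx A Bx hgnd hJ2x hsx hcx hA1 hB2 hAB v X] at h1
  rw [NtJ1 Jx gx A Bx hgnd hJ2x hsx hcx hA1 hB2 hAB u X] at h2
  have h3 := hsx u (Ct Jx gx A Bx hgnd X v)
  have h4 := gJ Jx gx A Bx hgnd hJ2x hsx hcx hA1 hB2 hAB (Nt Jx gx A Bx hgnd v X) u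
  have h5 := gJ Jx gx A Bx hgnd hJ2x hsx hcx hA1 hB2 hAB (Nt Jx gx A Bx hgnd u X) v
  linarith

lemma CIII (X Y : E) :
    Ct Jx gx A Bx hgnd (Jx Y) X - Jx (Ct Jx gx A Bx hgnd Y X)
      = -(1/2 : ℝ) • Nt Jx gx A Bx hgnd X Y := by
  apply gext Jx gx A Bx hgnd hJ2x hsx hcx hA1 hB2 hAB
  intro Z
  have h1 := hCt Jx gx A Bx hgnd (Jx Y) X Z
  rw [NtJ2 Jx gx A Bx hgnd hJ2x hsx hcx hA1 hB2 hAB X Y, NtJ1 Jx gx A Bx hgnd hJ2x hsx hcx hA1 hB2 hAB Z (Jx Y), NtJ2 Jx gx A Bx hgnd hJ2x hsx hcx hA1 hB2 hAB Z Y] at h1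
  simp only [map_neg, hJ2x, neg_neg, ContinuousLinearMap.neg_apply] at h1
  have h2 := hCt Jx gx A Bx hgnd Y X (Jx Z)
  rw [hJ2x] at h2
  simp only [map_neg, LinearMap.neg_apply, ContinuousLinearMap.neg_apply] at h2
  have h3 := gJ Jx gx A Bx hgnd hJ2x hsx hcx hA1 hB2 hAB (Ct Jx gx A Bx hgnd Y X) Z
  have h4 := hcx (Nt Jx gx A Bx hgnd X Y) Z
  simp only [map_add, map_sub, map_neg, map_smul, ContinuousLinearMap.add_apply,
    ContinuousLinearMap.sub_apply, ContinuousLinearMap.neg_apply, ContinuousLinearMap.smul_apply,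
    neg_smul, smul_eq_mul, neg_neg]
  linarith

lemma GamMet (X u v : E) :
    gx (Gam Jx gx A Bx hgnd X u) v + gx u (Gam Jx gx A Bx hgnd X v) = A X u v := by
  rw [Gam_apply, Gam_apply]
  simp only [map_add, map_sub, map_neg, map_smul, ContinuousLinearMap.add_apply,
    ContinuousLinearMap.sub_apply, ContinuousLinearMap.neg_apply, ContinuousLinearMap.smul_apply,
    neg_smul, smul_eq_mul, neg_neg]
  have f1 := Met0 Jx gx A Bx hgnd hJ2x hsx hcx hA1 hB2 hAB X u v
  have f2 := Cskew Jx gx A Bx hgnd hJ2x hsx hcx hA1 hB2 hAB X u v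
  have f3 := gJ Jx gx A Bx hgnd hJ2x hsx hcx hA1 hB2 hAB (Pm Jx gx A Bx hgnd X u) v
  have f4 := Pskew Jx gx A Bx hgnd hJ2x hsx hcx hA1 hB2 hAB X u (Jx v)
  have f5 : gx u (Pm Jx gx A Bx hgnd X (Jx v)) = -gx u (Jx (Pm Jx gx A Bx hgnd X v)) := by
    rw [PJ Jx gx A Bx hgnd hJ2x hsx hcx hA1 hB2 hAB X v]; simp [map_neg]
  linarith

lemma GamJ (X v : E) :
    Bx X v + Gam Jx gx A Bx hgnd X (Jx v) = Jx (Gam Jx gx A Bx hgnd X v) := by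
  rw [Gam_apply, Gam_apply, PJ Jx gx A Bx hgnd hJ2x hsx hcx hA1 hB2 hAB X v, CtJ Jx gx A Bx hgnd hJ2x hsx hcx hA1 hB2 hAB X v]
  simp only [map_add, map_sub, map_neg, map_smul, hJ2x, smul_neg, neg_neg]
  rw [Pm_apply]
  module


lemma GamT (X Y : E) :
    Jx (Gam Jx gx A Bx hgnd X Y) - Jx (Gam Jx gx A Bx hgnd Y X)
      + (Jx (Gam Jx gx A Bx hgnd (Jx X) (Jx Y)) - Jx (Gam Jx gx A Bx hgnd (Jx Y) (Jx X)))
      = (Gam Jx gx A Bx hgnd X (Jx Y) - Gam Jx gx A Bx hgnd (Jx Y) X)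
        - (Gam Jx gx A Bx hgnd (Jx X) Y - Gam Jx gx A Bx hgnd Y (Jx X)) := by
  have e1 : Ct Jx gx A Bx hgnd (Jx Y) X
      = Jx (Ct Jx gx A Bx hgnd Y X) - (1/2 : ℝ) • Nt Jx gx A Bx hgnd X Y := by
    have h := CIII Jx gx A Bx hgnd hJ2x hsx hcx hA1 hB2 hAB X Y
    linear_combination (norm := module) h
  have e2 : Ct Jx gx A Bx hgnd (Jx X) Y
      = Jx (Ct Jx gx A Bx hgnd X Y) - (1/2 : ℝ) • Nt Jx gx A Bx hgnd Y X := by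
    have h := CIII Jx gx A Bx hgnd hJ2x hsx hcx hA1 hB2 hAB Y X
    linear_combination (norm := module) h
  have e3 : Ct Jx gx A Bx hgnd (Jx X) (Jx Y)
      = -(Ct Jx gx A Bx hgnd X Y) - (1/2 : ℝ) • Jx (Nt Jx gx A Bx hgnd Y X) := by
    have h := CIII Jx gx A Bx hgnd hJ2x hsx hcx hA1 hB2 hAB (Jx Y) X
    rw [CtJ Jx gx A Bx hgnd hJ2x hsx hcx hA1 hB2 hAB X Y, hJ2x, NtJ1 Jx gx A Bx hgnd hJ2x hsx hcx hA1 hB2 hAB Y X] at h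
    linear_combination (norm := module) h
  have e4 : Ct Jx gx A Bx hgnd (Jx Y) (Jx X)
      = -(Ct Jx gx A Bx hgnd Y X) - (1/2 : ℝ) • Jx (Nt Jx gx A Bx hgnd X Y) := by
    have h := CIII Jx gx A Bx hgnd hJ2x hsx hcx hA1 hB2 hAB (Jx X) Y
    rw [CtJ Jx gx A Bx hgnd hJ2x hsx hcx hA1 hB2 hAB Y X, hJ2x, NtJ1 Jx gx A Bx hgnd hJ2x hsx hcx hA1 hB2 hAB X Y] at h
    linear_combination (norm := module) h
  rw [Gam_apply, Gam_apply, Gam_apply, Gam_apply, Gam_apply, Gam_apply, Gam_apply, Gam_apply]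
  rw [e3, e4, e1, e2, CtJ Jx gx A Bx hgnd hJ2x hsx hcx hA1 hB2 hAB X Y, CtJ Jx gx A Bx hgnd hJ2x hsx hcx hA1 hB2 hAB Y X]
  rw [PJ Jx gx A Bx hgnd hJ2x hsx hcx hA1 hB2 hAB X Y, PJ Jx gx A Bx hgnd hJ2x hsx hcx hA1 hB2 hAB (Jx X) Y, PJ Jx gx A Bx hgnd hJ2x hsx hcx hA1 hB2 hAB (Jx Y) X, PJ Jx gx A Bx hgnd hJ2x hsx hcx hA1 hB2 hAB Y X]
  rw [show G0 gx A hgnd Y X = G0 gx A hgnd X Y from G0sym Jx gx A Bx hgnd hJ2x hsx hcx hA1 hB2 hAB Y X,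
      show G0 gx A hgnd (Jx Y) (Jx X) = G0 gx A hgnd (Jx X) (Jx Y) from
        G0sym Jx gx A Bx hgnd hJ2x hsx hcx hA1 hB2 hAB (Jx Y) (Jx X),
      show G0 gx A hgnd (Jx Y) X = G0 gx A hgnd X (Jx Y) from G0sym Jx gx A Bx hgnd hJ2x hsx hcx hA1 hB2 hAB (Jx Y) X,
      show G0 gx A hgnd Y (Jx X) = G0 gx A hgnd (Jx X) Y from G0sym Jx gx A Bx hgnd hJ2x hsx hcx hA1 hB2 hAB Y (Jx X)]
  rw [Nt_apply Jx gx A Bx hgnd X Y, Nt_apply Jx gx A Bx hgnd Y X]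
  simp only [map_add, map_sub, map_neg, map_smul, hJ2x, smul_neg, neg_neg]
  module

lemma uniqPt (D : E →ₗ[ℝ] E →ₗ[ℝ] E)
    (hmet : ∀ X u v, gx (D X u) v + gx u (D X v) = 0)
    (hjc : ∀ X v, D X (Jx v) = Jx (D X v))
    (htor : ∀ X Y, Jx (D X Y) - Jx (D Y X)
        + (Jx (D (Jx X) (Jx Y)) - Jx (D (Jx Y) (Jx X)))
      = (D X (Jx Y) - D (Jx Y) X) - (D (Jx X) Y - D Y (Jx X))) :
    D = 0 := by
  have hD : ∀ a b, D (Jx a) b = Jx (D a b) := by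
    intro a b
    have h := htor b a
    rw [hjc (Jx b) a, hjc (Jx a) b, hjc b a, hjc a b] at h
    simp only [hJ2x, map_neg, neg_neg] at h
    have h2 : (2 : ℝ) • (D (Jx a) b) = (2 : ℝ) • (Jx (D a b)) := by
      linear_combination (norm := module) h
    exact smul_right_injective E two_ne_zero h2
  have key : ∀ X Y Z, gx (D X (Jx Y)) Z = 0 := by
    intro X Y Z
    have h1a := hmet X (Jx Y) Z
    have h1b := hsx (Jx Y) (D X Z)
    have h2 : gx (D (Jx X) Z) Y = -gx (D X Z) (Jx Y) := by
      rw [hD X Z]; exact gJ Jx gx A Bx hgnd hJ2x hsx hcx hA1 hB2 hAB (D X Z) Y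
    have h3a := hmet (Jx X) Y Z
    have h3b := hsx Y (D (Jx X) Z)
    have h4 : gx (D (Jx X) Y) Z = -gx (D X Y) (Jx Z) := by
      rw [hD X Y]; exact gJ Jx gx A Bx hgnd hJ2x hsx hcx hA1 hB2 hAB (D X Y) Z
    have h5 : gx (D X (Jx Y)) Z = -gx (D X Y) (Jx Z) := by
      rw [hjc X Y]; exact gJ Jx gx A Bx hgnd hJ2x hsx hcx hA1 hB2 hAB (D X Y) Z
    linarith
  ext X u
  have hu : Jx (-(Jx u)) = u := by rw [map_neg, hJ2x, neg_neg]
  apply gext Jx gx A Bx hgnd hJ2x hsx hcx hA1 hB2 hAB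
  intro Z
  have hz := key X (-(Jx u)) Z
  rw [hu] at hz
  simp [hz]

end Identities

lemma nondegOfPos (hpos : ∀ v : E, v ≠ 0 → 0 < gx v v) : (gb gx).Nondegenerate := by
  constructor <;> intro m hm <;> by_contra h0 <;> exact absurd (hm m) (ne_of_gt (hpos m h0))

end Stmt4Aux

end



open Stmt4Aux in
theorem stmt4 (J : E → E →L[ℝ] E) (hJs : ContDiff ℝ (⊤ : ℕ∞) J)
    (hJ2 : ∀ x v, J x (J x v) = -v)
    (g : E → E →L[ℝ] E →L[ℝ] ℝ) (hgs : ContDiff ℝ (⊤ : ℕ∞) g)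
    (hsymm : ∀ x u v, g x u v = g x v u)
    (hpos : ∀ x v, v ≠ 0 → 0 < g x v v)
    (hcompat : ∀ x u v, g x (J x u) (J x v) = g x u v) :
    ∃! Γ : E → E →ₗ[ℝ] E →ₗ[ℝ] E,
      CovMetric g Γ ∧ CovJ J Γ ∧ Torsion11Free J Γ := by
  have hgd : Differentiable ℝ g := hgs.differentiable (by simp)
  have hJd : Differentiable ℝ J := hJs.differentiable (by simp)
  have keyA : ∀ x (X u v : E), fderiv ℝ (fun y => g y u v) x X = fderiv ℝ g x X u v := by
    intro x X u v
    have h := (((hgd x).hasFDerivAt.clm_apply (hasFDerivAt_const u x)).clm_apply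
        (hasFDerivAt_const v x)).fderiv
    rw [h]; simp
  have keyB : ∀ x (X v : E), fderiv ℝ (fun y => J y v) x X = fderiv ℝ J x X v := by
    intro x X v
    have h := ((hJd x).hasFDerivAt.clm_apply (hasFDerivAt_const v x)).fderiv
    rw [h]; simp
  have hA1 : ∀ x (X u v : E), fderiv ℝ g x X u v = fderiv ℝ g x X v u := by
    intro x X u v
    rw [← keyA x X u v, ← keyA x X v u,
      show (fun y => g y u v) = (fun y => g y v u) from funext fun y => hsymm y u v]
  have hB2 : ∀ x (X v : E), fderiv ℝ J x X (J x v) + J x (fderiv ℝ J x X v) = 0 := by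
    intro x X v
    have hd1 := (hJd x).hasFDerivAt.clm_apply (hasFDerivAt_const v x)
    have hd2 := (hJd x).hasFDerivAt.clm_apply hd1
    rw [show (fun y => J y (J y v)) = fun _ : E => -v from funext fun y => hJ2 y v] at hd2
    have h0 := hd2.unique (hasFDerivAt_const (-v) x)
    have hx := DFunLike.congr_fun h0 X
    simp at hx
    linear_combination (norm := module) hx
  have hAB : ∀ x (X u v : E), fderiv ℝ g x X (J x u) (J x v)
      + g x (fderiv ℝ J x X u) (J x v) + g x (J x u) (fderiv ℝ J x X v)
      = fderiv ℝ g x X u v := by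
    intro x X u v
    have hdu := (hJd x).hasFDerivAt.clm_apply (hasFDerivAt_const u x)
    have hdv := (hJd x).hasFDerivAt.clm_apply (hasFDerivAt_const v x)
    have hd2 := ((hgd x).hasFDerivAt.clm_apply hdu).clm_apply hdv
    have hd3 := ((hgd x).hasFDerivAt.clm_apply (hasFDerivAt_const u x)).clm_apply
        (hasFDerivAt_const v x)
    rw [show (fun y => g y (J y u) (J y v)) = fun y => g y u v from
      funext fun y => hcompat y u v] at hd2
    have h0 := hd2.unique hd3
    have hx := DFunLike.congr_fun h0 X
    simp at hx
    linarith
  have hnd : ∀ x : E, (gb (g x)).Nondegenerate := fun x =>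
    nondegOfPos (g x) (fun v hv => hpos x v hv)
  set Γc : E → E →ₗ[ℝ] E →ₗ[ℝ] E := fun x =>
    Gam (J x) (g x) (fderiv ℝ g x) (fderiv ℝ J x) (hnd x) with hΓc
  have Pmet : CovMetric g Γc := by
    intro x X u v
    rw [keyA]
    exact GamMet (J x) (g x) (fderiv ℝ g x) (fderiv ℝ J x) (hnd x) (hJ2 x) (hsymm x)
      (hcompat x) (hA1 x) (hB2 x) (hAB x) X u v |>.symm
  have Pj : CovJ J Γc := by
    intro x X v
    rw [keyB]
    exact GamJ (J x) (g x) (fderiv ℝ g x) (fderiv ℝ J x) (hnd x) (hJ2 x) (hsymm x)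
      (hcompat x) (hA1 x) (hB2 x) (hAB x) X v
  have PQ : ∀ x X Y : E, J x (Γc x X Y) - J x (Γc x Y X)
      + (J x (Γc x (J x X) (J x Y)) - J x (Γc x (J x Y) (J x X)))
      = (Γc x X (J x Y) - Γc x (J x Y) X) - (Γc x (J x X) Y - Γc x Y (J x X)) :=
    fun x X Y => GamT (J x) (g x) (fderiv ℝ g x) (fderiv ℝ J x) (hnd x) (hJ2 x) (hsymm x)
      (hcompat x) (hA1 x) (hB2 x) (hAB x) X Y
  have Pt : Torsion11Free J Γc := by
    intro x X Y
    have h1 : J x (tauC Γc x (X, -(J x X)) (Y, J x Y)).1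
        = (tauC Γc x (X, -(J x X)) (Y, J x Y)).2 := by
      simp only [tauC, map_neg, LinearMap.neg_apply, map_sub, map_add, neg_neg]
      linear_combination (norm := module) PQ x X Y
    exact ⟨h1, by rw [← h1, hJ2]⟩
  have torOf : ∀ (Γ : E → E →ₗ[ℝ] E →ₗ[ℝ] E), Torsion11Free J Γ → ∀ x X Y : E,
      J x (Γ x X Y) - J x (Γ x Y X)
        + (J x (Γ x (J x X) (J x Y)) - J x (Γ x (J x Y) (J x X)))
      = (Γ x X (J x Y) - Γ x (J x Y) X) - (Γ x (J x X) Y - Γ x Y (J x X)) := by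
    intro Γ hT x X Y
    have h := (hT x X Y).1
    simp only [tauC, map_neg, LinearMap.neg_apply, map_sub, map_add, neg_neg] at h
    linear_combination (norm := module) h
  refine ⟨Γc, ⟨Pmet, Pj, Pt⟩, ?_⟩
  rintro Γ' ⟨hm', hj', ht'⟩
  funext x
  refine sub_eq_zero.mp
    (uniqPt (J x) (g x) (fderiv ℝ g x) (fderiv ℝ J x) (hnd x) (hJ2 x) (hsymm x)
      (hcompat x) (hA1 x) (hB2 x) (hAB x) (Γ' x - Γc x) ?_ ?_ ?_)
  · intro X u v
    have h1 := hm' x X u v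
    have h2 := Pmet x X u v
    simp only [LinearMap.sub_apply, map_sub, ContinuousLinearMap.sub_apply]
    linarith
  · intro X v
    have h1 := hj' x X v
    have h2 := Pj x X v
    simp only [LinearMap.sub_apply, map_sub]
    linear_combination (norm := module) h1 - h2
  · intro X Y
    have h1 := torOf Γ' ht' x X Y
    have h2 := torOf Γc Pt x X Y
    simp only [LinearMap.sub_apply, map_sub]
    linear_combination (norm := module) h1 - h2
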